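/- In the semi-infinite Weil complex $\mathcal W = \mathcal E\otimes\mathcal S$ of the Virasoro algebra, the image of the differential $[Q,-]$ is contained in the subspace $\mathcal D$ spanned by standard monomials in $\partial^n b, \partial^m c, \partial^s\beta, \partial^t\gamma$ which contain at least one derivative (some exponent positive). -/

import Mathlib

open scoped BigOperators

/-- Generalized binomial coefficient `m choose j` for an integer `m`, as a complex number. -/
noncomputable def zchoose (m : ℤ) (j : ℕ) : ℂ :=
  (∏ i ∈ Finset.range j, ((m : ℂ) - (i : ℂ))) / (Nat.factorial j : ℂ)

/-- A vertex superalgebra presented via its circle products `∘ₙ`, in the sense of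
Lian-Zuckerman (a commutative quantum operator algebra).  The parity grading is recorded by
the submodules `even`, `odd`; `comm_even`/`comm_odd` encode the Borcherds commutator formula
for the Fourier modes acting on the left regular module, and `iterate_even`/`iterate_odd`
encode the iterate (associativity) formula. -/
structure VA (V : Type) [AddCommGroup V] [Module ℂ V] where
  circ : ℤ → V →ₗ[ℂ] V →ₗ[ℂ] V
  one : V
  even : Submodule ℂ V
  odd : Submodule ℂ V
  one_even : one ∈ even
  circ_ee : ∀ (n : ℤ) {a b : V}, a ∈ even → b ∈ even → circ n a b ∈ even
  circ_oo : ∀ (n : ℤ) {a b : V}, a ∈ odd → b ∈ odd → circ n a b ∈ even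
  circ_eo : ∀ (n : ℤ) {a b : V}, a ∈ even → b ∈ odd → circ n a b ∈ odd
  circ_oe : ∀ (n : ℤ) {a b : V}, a ∈ odd → b ∈ even → circ n a b ∈ odd
  unit_left : ∀ (n : ℤ) (a : V), circ n one a = if n = -1 then a else 0
  unit_right_wick : ∀ a : V, circ (-1) a one = a
  unit_right_nonneg : ∀ (n : ℤ) (a : V), 0 ≤ n → circ n a one = 0
  truncate : ∀ a b : V, ∃ N : ℕ, ∀ n : ℤ, (N : ℤ) ≤ n → circ n a b = 0
  comm_even : ∀ {a b : V}, (a ∈ even ∨ b ∈ even) → ∀ (m n : ℤ) (c : V),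
    circ m a (circ n b c) - circ n b (circ m a c)
      = ∑ᶠ j : ℕ, zchoose m j • circ (m + n - (j : ℤ)) (circ (j : ℤ) a b) c
  comm_odd : ∀ {a b : V}, a ∈ odd → b ∈ odd → ∀ (m n : ℤ) (c : V),
    circ m a (circ n b c) + circ n b (circ m a c)
      = ∑ᶠ j : ℕ, zchoose m j • circ (m + n - (j : ℤ)) (circ (j : ℤ) a b) c
  iterate_even : ∀ {a b : V}, (a ∈ even ∨ b ∈ even) → ∀ (m n : ℤ) (c : V),
    circ m (circ n a b) c
      = ∑ᶠ j : ℕ, ((-1 : ℂ) ^ j * zchoose n j) •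
          (circ (n - (j : ℤ)) a (circ (m + (j : ℤ)) b c)
            - ((-1 : ℂ) ^ n) • circ (n + m - (j : ℤ)) b (circ (j : ℤ) a c))
  iterate_odd : ∀ {a b : V}, a ∈ odd → b ∈ odd → ∀ (m n : ℤ) (c : V),
    circ m (circ n a b) c
      = ∑ᶠ j : ℕ, ((-1 : ℂ) ^ j * zchoose n j) •
          (circ (n - (j : ℤ)) a (circ (m + (j : ℤ)) b c)
            + ((-1 : ℂ) ^ n) • circ (n + m - (j : ℤ)) b (circ (j : ℤ) a c))

namespace VA

variable {V : Type} [AddCommGroup V] [Module ℂ V] (A : VA V)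

/-- The formal derivative `∂a = a ∘₋₂ 1`. -/
def D (a : V) : V := A.circ (-2) a A.one

/-- The Wick (normally ordered) product `:ab: = a ∘₋₁ b`. -/
def wick (a b : V) : V := A.circ (-1) a b

end VA

namespace VA

/-- Iterated (right-normalized) Wick product of a list of elements. -/
def wlist {V : Type} [AddCommGroup V] [Module ℂ V] (A : VA V) : List V → V
  | [] => A.one
  | a :: l => A.wick a (wlist A l)

/-- Iterated Wick power. -/
def wpow {V : Type} [AddCommGroup V] [Module ℂ V] (A : VA V) (a : V) : ℕ → V
  | 0 => A.one
  | k + 1 => A.wick a (wpow A a k)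

end VA

namespace VA

variable {V : Type} [AddCommGroup V] [Module ℂ V]

/-- The standard monomial `:∂^{n₁}b ⋯ ∂^{nᵢ}b ∂^{m₁}c ⋯ ∂^{mⱼ}c ∂^{s₁}β ⋯ ∂^{sₖ}β ∂^{t₁}γ ⋯ ∂^{tₗ}γ:`. -/
def stdMon (A : VA V) (b c β γ : V) (ns ms ss ts : List ℕ) : V :=
  wlist A ((ns.map fun k => A.D^[k] b) ++ (ms.map fun k => A.D^[k] c)
    ++ (ss.map fun k => A.D^[k] β) ++ (ts.map fun k => A.D^[k] γ))

/-- The set of all standard monomials. -/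
def StdSet (A : VA V) (b c β γ : V) : Set V :=
  {v | ∃ ns ms ss ts : List ℕ,
    List.Chain' (· > ·) ns ∧ List.Chain' (· > ·) ms ∧
    List.Chain' (· ≥ ·) ss ∧ List.Chain' (· ≥ ·) ts ∧
    v = stdMon A b c β γ ns ms ss ts}

/-- The set of standard monomials containing at least one derivative. -/
def DSet (A : VA V) (b c β γ : V) : Set V :=
  {v | ∃ ns ms ss ts : List ℕ,
    List.Chain' (· > ·) ns ∧ List.Chain' (· > ·) ms ∧
    List.Chain' (· ≥ ·) ss ∧ List.Chain' (· ≥ ·) ts ∧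
    (∃ k ∈ ns ++ ms ++ ss ++ ts, 0 < k) ∧
    v = stdMon A b c β γ ns ms ss ts}

end VA


/-!
`Q = J₍₀₎` is an odd derivation of the Wick product that commutes with `∂`. Grade a Wick word in
the letters `∂ᵏb, ∂ᵏc, ∂ᵏβ, ∂ᵏγ` by its total number of derivatives. Every nonnegative product
of two letters is a scalar multiple of the vacuum, and such contractions remove exactly as many
derivatives as the mode index, so Wick products of words never lower the grading. On a generator,
`Q` produces a combination of Wick pairs of letters with one derivative in total (from
`J = :(L^𝒮 + ½ L^ℰ) c: + ¾ ∂²c`), hence `Q` raises the grading of every word by one. Finally,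
letters supercommute under the Wick product with no correction term, so a word of positive degree
equals, up to a scalar, a standard monomial of the same degree (or vanishes, when an odd letter
repeats), and such a monomial contains a derivative.
-/

lemma zchoose_zero (j : ℕ) : zchoose 0 j = if j = 0 then 1 else 0 := by
  cases j with
  | zero => simp [zchoose]
  | succ n => simp [zchoose, Finset.prod_range_succ']

lemma zchoose_neg_two (j : ℕ) : zchoose (-2) j = (-1 : ℂ) ^ j * (j + 1) := by
  have h : ∏ i ∈ Finset.range j, ((-2 : ℂ) - i) = (-1 : ℂ) ^ j * (j + 1).factorial := by
    induction j with
    | zero => simp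
    | succ n ih =>
      rw [Finset.prod_range_succ, ih, Nat.factorial_succ (n + 1)]
      push_cast
      ring
  have hj : (j.factorial : ℂ) ≠ 0 := Nat.cast_ne_zero.2 j.factorial_ne_zero
  rw [zchoose, Int.cast_neg, Int.cast_ofNat, h, Nat.factorial_succ]
  push_cast
  field_simp

lemma finsum_mem_submodule {V ι : Type*} [AddCommGroup V] [Module ℂ V] {P : Submodule ℂ V}
    {f : ι → V} (h : ∀ i, f i ∈ P) : ∑ᶠ i, f i ∈ P :=
  finsum_induction (· ∈ P) P.zero_mem (fun _ _ => P.add_mem) h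

lemma finsum_zchoose_zero_smul {V : Type*} [AddCommGroup V] [Module ℂ V] (g : ℕ → V) :
    ∑ᶠ j : ℕ, zchoose 0 j • g j = g 0 := by
  rw [finsum_eq_single _ 0 fun j hj => by rw [zchoose_zero, if_neg hj, zero_smul],
    zchoose_zero, if_pos rfl, one_smul]

lemma apply_mem_of_mem_span {M N : Type*} [AddCommGroup M] [Module ℂ M] [AddCommGroup N]
    [Module ℂ N] {f : M →ₗ[ℂ] N} {s : Set M} {P : Submodule ℂ N} (h : ∀ x ∈ s, f x ∈ P)
    {v : M} (hv : v ∈ Submodule.span ℂ s) : f v ∈ P :=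
  (Submodule.span_le (p := P.comap f)).2 h hv

namespace VA

variable {V : Type} [AddCommGroup V] [Module ℂ V] (A : VA V)

/-- `true` stands for odd, `false` for even. -/
def HasParity (v : V) : Bool → Prop
  | true => v ∈ A.odd
  | false => v ∈ A.even

noncomputable def koszulSign (p q : Bool) : ℂ := if p && q then -1 else 1

variable {A}

lemma HasParity.D {v : V} {p : Bool} (h : A.HasParity v p) : A.HasParity (A.D v) p := by
  cases p
  · exact A.circ_ee _ h A.one_even
  · exact A.circ_oe _ h A.one_even

lemma HasParity.iterate_D {v : V} {p : Bool} (h : A.HasParity v p) (k : ℕ) :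
    A.HasParity (A.D^[k] v) p := by
  induction k with
  | zero => exact h
  | succ n ih => rw [Function.iterate_succ_apply']; exact ih.D

lemma commutator_formula {a b : V} {pa pb : Bool} (ha : A.HasParity a pa)
    (hb : A.HasParity b pb) (m n : ℤ) (c : V) :
    A.circ m a (A.circ n b c)
      = koszulSign pa pb • A.circ n b (A.circ m a c)
        + ∑ᶠ j : ℕ, zchoose m j • A.circ (m + n - j) (A.circ j a b) c := by
  cases pa <;> cases pb
  all_goals first
    | rw [← A.comm_even (Or.inl ha)] | rw [← A.comm_even (Or.inr hb)]
    | rw [← A.comm_odd ha hb]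
  all_goals simp only [koszulSign, Bool.false_and, Bool.and_false, Bool.and_self,
    Bool.false_eq_true, if_false, if_true, one_smul, neg_one_smul]
  all_goals abel

lemma iterate_formula {a b : V} {pa pb : Bool} (ha : A.HasParity a pa)
    (hb : A.HasParity b pb) (m n : ℤ) (c : V) :
    A.circ m (A.circ n a b) c
      = ∑ᶠ j : ℕ, ((-1 : ℂ) ^ j * zchoose n j) •
          (A.circ (n - j) a (A.circ (m + j) b c)
            - (koszulSign pa pb * (-1 : ℂ) ^ n) • A.circ (n + m - j) b (A.circ j a c)) := by
  cases pa <;> cases pb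
  all_goals first
    | rw [A.iterate_even (Or.inl ha)] | rw [A.iterate_even (Or.inr hb)]
    | rw [A.iterate_odd ha hb]
  all_goals simp only [koszulSign, Bool.false_and, Bool.and_false, Bool.and_self,
    Bool.false_eq_true, if_false, if_true, one_mul, neg_mul, neg_smul, sub_neg_eq_add]

variable (A)

lemma circ_D_left (a x : V) (m : ℤ) : A.circ m (A.D a) x = (-m : ℂ) • A.circ (m - 1) a x := by
  have hsq (j : ℕ) : (-1 : ℂ) ^ j * (-1 : ℂ) ^ j = 1 := by rw [← mul_pow]; norm_num
  -- `1₍ₙ₎ y` vanishes unless `n = -1`, which leaves `j = -1 - m` (if `m < 0`) or `j = m - 1`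
  have hterm (j : ℕ) : ((-1 : ℂ) ^ j * zchoose (-2) j) •
      (A.circ (-2 - j) a (A.circ (m + j) A.one x)
        - (-1 : ℂ) ^ (-2 : ℤ) • A.circ (-2 + m - j) A.one (A.circ j a x))
      = if (j : ℤ) = -1 - m ∨ (j : ℤ) = m - 1 then (-m : ℂ) • A.circ (m - 1) a x else 0 := by
    rw [A.unit_left, A.unit_left, zchoose_neg_two, ← mul_assoc, hsq, one_mul]
    by_cases h₁ : (j : ℤ) = -1 - m
    · have hj : (j : ℂ) = -1 - m := by exact_mod_cast h₁
      rw [if_pos (by omega), if_neg (by omega), if_pos (Or.inl h₁), smul_zero, sub_zero,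
        show -2 - (j : ℤ) = m - 1 by omega, hj]
      ring_nf
    by_cases h₂ : (j : ℤ) = m - 1
    · have hj : (j : ℂ) = m - 1 := by exact_mod_cast h₂
      rw [if_neg (by omega), if_pos (by omega), if_pos (Or.inr h₂), map_zero, zero_sub, h₂, hj,
        show (-1 : ℂ) ^ (-2 : ℤ) = 1 by norm_num, one_smul, smul_neg, ← neg_smul]
      ring_nf
    rw [if_neg (by omega), if_neg (by omega), if_neg (by tauto)]
    simp
  rw [D, A.iterate_even (Or.inr A.one_even), finsum_congr hterm]
  rcases lt_trichotomy m 0 with hm | rfl | hm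
  · rw [finsum_eq_single _ (-1 - m).toNat fun j hj => if_neg (by omega), if_pos (by omega)]
  · simp
  · rw [finsum_eq_single _ (m - 1).toNat fun j hj => if_neg (by omega), if_pos (by omega)]

lemma circ_zero_D_left (a x : V) : A.circ 0 (A.D a) x = 0 := by
  rw [circ_D_left]; simp

lemma circ_neg_one_iterate_D_left (a x : V) (j : ℕ) :
    A.circ (-1) (A.D^[j] a) x = (j.factorial : ℂ) • A.circ (-1 - j) a x := by
  induction j generalizing a with
  | zero => simp
  | succ n ih =>
    rw [Function.iterate_succ_apply, ih, circ_D_left, smul_smul, Nat.factorial_succ,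
      show -1 - (n : ℤ) - 1 = -1 - (n + 1 : ℕ) by push_cast; ring]
    push_cast
    ring_nf

lemma circ_neg_one_sub (a x : V) (j : ℕ) :
    A.circ (-1 - j) a x = (j.factorial : ℂ)⁻¹ • A.wick (A.D^[j] a) x := by
  rw [wick, circ_neg_one_iterate_D_left, smul_smul,
    inv_mul_cancel₀ (Nat.cast_ne_zero.2 j.factorial_ne_zero), one_smul]

def ScalarPairing (x y : V) (d : ℕ) : Prop :=
  ∃ κ : ℂ, ∀ m : ℕ, A.circ m x y = if m = d then κ • A.one else 0

variable {A}

lemma scalarPairing_zero {x y : V} (κ : ℂ) (h₀ : A.circ 0 x y = κ • A.one)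
    (h : ∀ n : ℤ, 1 ≤ n → A.circ n x y = 0) : A.ScalarPairing x y 0 :=
  ⟨κ, fun m => by
    rcases m with _ | m
    · exact h₀
    · exact h _ (by omega)⟩

lemma scalarPairing_of_forall_eq_zero {x y : V} (h : ∀ n : ℤ, 0 ≤ n → A.circ n x y = 0) :
    A.ScalarPairing x y 0 :=
  scalarPairing_zero 0 (by rw [h 0 le_rfl, zero_smul]) fun n hn => h n (by omega)

lemma ScalarPairing.D_left {x y : V} {d : ℕ} (h : A.ScalarPairing x y d) :
    A.ScalarPairing (A.D x) y (d + 1) := by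
  obtain ⟨κ, hκ⟩ := h
  refine ⟨-(d + 1 : ℂ) * κ, fun m => ?_⟩
  rcases m with _ | m
  · simp [circ_D_left]
  · rw [circ_D_left, show ((m + 1 : ℕ) : ℤ) - 1 = m by push_cast; ring, hκ]
    split_ifs with h <;> try omega
    · subst h; push_cast; rw [smul_smul]
    · rw [smul_zero]

lemma ScalarPairing.D_right {x y : V} {px py : Bool} (hx : A.HasParity x px)
    (hy : A.HasParity y py) {d : ℕ} (h : A.ScalarPairing x y d) :
    A.ScalarPairing x (A.D y) (d + 1) := by
  obtain ⟨κ, hκ⟩ := h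
  refine ⟨zchoose (d + 1 : ℕ) d * κ, fun m => ?_⟩
  -- the unit `1₍ₘ₋₂₋ⱼ₎` survives only for `j = m - 1`
  have hterm (j : ℕ) : zchoose m j • A.circ (m + -2 - j) (A.circ j x y) A.one
      = if j + 1 = m ∧ j = d then (zchoose m j * κ) • A.one else 0 := by
    rw [hκ]
    split_ifs <;> try omega
    · rw [map_smul, LinearMap.smul_apply, A.unit_left, if_pos (by omega), smul_smul]
    · rw [map_smul, LinearMap.smul_apply, A.unit_left, if_neg (by omega), smul_zero, smul_zero]
    · rw [map_zero, LinearMap.zero_apply, smul_zero]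
  rw [D, commutator_formula hx hy, A.unit_right_nonneg _ _ (by omega), map_zero, smul_zero,
    zero_add, finsum_congr hterm]
  by_cases hm : m = d + 1
  · subst hm
    rw [finsum_eq_single _ d fun j hj => if_neg (by omega), if_pos ⟨rfl, rfl⟩, if_pos rfl]
  · rw [finsum_eq_zero_of_forall_eq_zero fun j => if_neg (by omega), if_neg hm]

lemma D_wick {a b : V} {pa pb : Bool} (ha : A.HasParity a pa) (hb : A.HasParity b pb) :
    A.D (A.wick a b) = A.wick (A.D a) b + A.wick a (A.D b) := by
  rw [D, wick, iterate_formula ha hb, finsum_eq_sum_of_support_subset (s := Finset.range 2)]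
  · simp [Finset.sum_range_succ, zchoose, A.unit_right_nonneg, A.unit_right_wick, wick,
      circ_D_left]
    exact add_comm _ _
  · refine fun j hj => Finset.mem_coe.2 (Finset.mem_range.2 (not_le.1 fun hj₂ => hj ?_))
    dsimp only
    rw [A.unit_right_nonneg j _ (by omega), A.unit_right_nonneg (-2 + j) _ (by omega)]
    simp

lemma circ_zero_wick {J x : V} {pJ px : Bool} (hJ : A.HasParity J pJ) (hx : A.HasParity x px)
    (z : V) :
    A.circ 0 J (A.wick x z)
      = A.wick (A.circ 0 J x) z + koszulSign pJ px • A.wick x (A.circ 0 J z) := by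
  rw [wick, commutator_formula hJ hx, zero_add,
    finsum_zchoose_zero_smul fun j : ℕ => A.circ (-1 - j) (A.circ j J x) z]
  simp only [Nat.cast_zero, sub_zero, wick]
  abel

lemma circ_zero_D {J x : V} {pJ px : Bool} (hJ : A.HasParity J pJ) (hx : A.HasParity x px) :
    A.circ 0 J (A.D x) = A.D (A.circ 0 J x) := by
  rw [D, commutator_formula hJ hx, A.unit_right_nonneg 0 _ le_rfl, map_zero, smul_zero,
    zero_add, zero_add, finsum_zchoose_zero_smul fun j : ℕ => A.circ (-2 - j) (A.circ j J x) A.one]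
  simp only [Nat.cast_zero, sub_zero, D]

end VA

inductive WeilGen
  | b | c | β | γ
deriving DecidableEq

def WeilGen.isOdd : WeilGen → Bool
  | b | c => true
  | β | γ => false

/-- `(g, k)` stands for `∂ᵏ g`. -/
abbrev WeilLetter : Type := WeilGen × ℕ

def wordDeg (w : List WeilLetter) : ℕ := (w.map Prod.snd).sum

lemma wordDeg_cons (ℓ : WeilLetter) (w : List WeilLetter) :
    wordDeg (ℓ :: w) = ℓ.2 + wordDeg w := by
  simp [wordDeg]

def stdWord (ns ms ss ts : List ℕ) : List WeilLetter :=
  ns.map (.b, ·) ++ ms.map (.c, ·) ++ ss.map (.β, ·) ++ ts.map (.γ, ·)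

lemma wordDeg_stdWord (ns ms ss ts : List ℕ) :
    wordDeg (stdWord ns ms ss ts) = (ns ++ ms ++ ss ++ ts).sum := by
  simp [wordDeg, stdWord, List.map_map, Function.comp_def]

lemma exists_perm_stdWord (w : List WeilLetter) :
    ∃ ns ms ss ts : List ℕ, w.Perm (stdWord ns ms ss ts) := by
  induction w with
  | nil => exact ⟨[], [], [], [], .nil⟩
  | cons ℓ w ih =>
    obtain ⟨ns, ms, ss, ts, h⟩ := ih
    obtain ⟨g, k⟩ := ℓ
    cases g
    · exact ⟨k :: ns, ms, ss, ts, h.cons _⟩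
    · refine ⟨ns, k :: ms, ss, ts, (h.cons _).trans (List.perm_iff_count.2 fun a => ?_)⟩
      simp [stdWord, List.count_cons]
      omega
    · refine ⟨ns, ms, k :: ss, ts, (h.cons _).trans (List.perm_iff_count.2 fun a => ?_)⟩
      simp [stdWord, List.count_cons]
      omega
    · refine ⟨ns, ms, ss, k :: ts, (h.cons _).trans (List.perm_iff_count.2 fun a => ?_)⟩
      simp [stdWord, List.count_cons]
      omega

lemma exists_sorted_perm_stdWord (w : List WeilLetter) :
    ∃ ns ms ss ts : List ℕ, ns.Pairwise (· ≥ ·) ∧ ms.Pairwise (· ≥ ·) ∧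
      ss.Pairwise (· ≥ ·) ∧ ts.Pairwise (· ≥ ·) ∧ w.Perm (stdWord ns ms ss ts) := by
  let sort (l : List ℕ) : List ℕ := l.mergeSort fun a b => decide (b ≤ a)
  have hsorted (l : List ℕ) : (sort l).Pairwise (· ≥ ·) := by
    simpa using List.pairwise_mergeSort (le := fun a b => decide (b ≤ a))
      (fun a b c hab hbc => by simp at *; omega) (fun a b => by simp; omega) l
  have hperm (g : WeilGen) (l : List ℕ) : ((sort l).map (g, ·)).Perm (l.map (g, ·)) :=
    (l.mergeSort_perm _).map _
  obtain ⟨ns, ms, ss, ts, h⟩ := exists_perm_stdWord w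
  exact ⟨_, _, _, _, hsorted ns, hsorted ms, hsorted ss, hsorted ts, h.trans
    ((((hperm _ ns).append (hperm _ ms)).append (hperm _ ss)).append (hperm _ ts)).symm⟩

structure WeilData (V : Type) [AddCommGroup V] [Module ℂ V] where
  A : VA V
  b : V
  c : V
  β : V
  γ : V
  hb : b ∈ A.odd
  hc : c ∈ A.odd
  hbc0 : A.circ 0 b c = A.one
  hbc : ∀ n : ℤ, 1 ≤ n → A.circ n b c = 0
  hcb0 : A.circ 0 c b = A.one
  hcb : ∀ n : ℤ, 1 ≤ n → A.circ n c b = 0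
  hbb : ∀ n : ℤ, 0 ≤ n → A.circ n b b = 0
  hcc : ∀ n : ℤ, 0 ≤ n → A.circ n c c = 0
  hβ : β ∈ A.even
  hγ : γ ∈ A.even
  hβγ0 : A.circ 0 β γ = A.one
  hβγ : ∀ n : ℤ, 1 ≤ n → A.circ n β γ = 0
  hγβ0 : A.circ 0 γ β = -A.one
  hγβ : ∀ n : ℤ, 1 ≤ n → A.circ n γ β = 0
  hββ : ∀ n : ℤ, 0 ≤ n → A.circ n β β = 0
  hγγ : ∀ n : ℤ, 0 ≤ n → A.circ n γ γ = 0
  hcross : ∀ n : ℤ, 0 ≤ n →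
    A.circ n b β = 0 ∧ A.circ n b γ = 0 ∧ A.circ n c β = 0 ∧ A.circ n c γ = 0 ∧
    A.circ n β b = 0 ∧ A.circ n γ b = 0 ∧ A.circ n β c = 0 ∧ A.circ n γ c = 0

namespace WeilData

variable {V : Type} [AddCommGroup V] [Module ℂ V] (C : WeilData V)

def gen : WeilGen → V
  | .b => C.b
  | .c => C.c
  | .β => C.β
  | .γ => C.γ

def letter (ℓ : WeilLetter) : V := C.A.D^[ℓ.2] (C.gen ℓ.1)

def word (w : List WeilLetter) : V := C.A.wlist (w.map C.letter)

lemma word_cons (ℓ : WeilLetter) (w : List WeilLetter) :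
    C.word (ℓ :: w) = C.A.wick (C.letter ℓ) (C.word w) := rfl

lemma hasParity_gen (g : WeilGen) : C.A.HasParity (C.gen g) g.isOdd := by
  cases g
  exacts [C.hb, C.hc, C.hβ, C.hγ]

lemma hasParity_letter (ℓ : WeilLetter) : C.A.HasParity (C.letter ℓ) ℓ.1.isOdd :=
  (C.hasParity_gen ℓ.1).iterate_D ℓ.2

lemma D_letter (g : WeilGen) (k : ℕ) : C.A.D (C.letter (g, k)) = C.letter (g, k + 1) :=
  (Function.iterate_succ_apply' C.A.D k (C.gen g)).symm

lemma iterate_D_letter (g : WeilGen) (k j : ℕ) :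
    C.A.D^[j] (C.letter (g, k)) = C.letter (g, j + k) := by
  rw [letter, letter, ← Function.iterate_add_apply]

lemma scalarPairing_gen (g₁ g₂ : WeilGen) : C.A.ScalarPairing (C.gen g₁) (C.gen g₂) 0 := by
  cases g₁ <;> cases g₂
  · exact VA.scalarPairing_of_forall_eq_zero C.hbb
  · exact VA.scalarPairing_zero 1 (by rw [gen, gen, C.hbc0, one_smul]) C.hbc
  · exact VA.scalarPairing_of_forall_eq_zero fun n hn => (C.hcross n hn).1
  · exact VA.scalarPairing_of_forall_eq_zero fun n hn => (C.hcross n hn).2.1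
  · exact VA.scalarPairing_zero 1 (by rw [gen, gen, C.hcb0, one_smul]) C.hcb
  · exact VA.scalarPairing_of_forall_eq_zero C.hcc
  · exact VA.scalarPairing_of_forall_eq_zero fun n hn => (C.hcross n hn).2.2.1
  · exact VA.scalarPairing_of_forall_eq_zero fun n hn => (C.hcross n hn).2.2.2.1
  · exact VA.scalarPairing_of_forall_eq_zero fun n hn => (C.hcross n hn).2.2.2.2.1
  · exact VA.scalarPairing_of_forall_eq_zero fun n hn => (C.hcross n hn).2.2.2.2.2.2.1
  · exact VA.scalarPairing_of_forall_eq_zero C.hββ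
  · exact VA.scalarPairing_zero 1 (by rw [gen, gen, C.hβγ0, one_smul]) C.hβγ
  · exact VA.scalarPairing_of_forall_eq_zero fun n hn => (C.hcross n hn).2.2.2.2.2.1
  · exact VA.scalarPairing_of_forall_eq_zero fun n hn => (C.hcross n hn).2.2.2.2.2.2.2
  · exact VA.scalarPairing_zero (-1) (by rw [gen, gen, C.hγβ0, neg_one_smul]) C.hγβ
  · exact VA.scalarPairing_of_forall_eq_zero C.hγγ

lemma scalarPairing_letter (x y : WeilLetter) :
    C.A.ScalarPairing (C.letter x) (C.letter y) (x.2 + y.2) := by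
  obtain ⟨g₁, k₁⟩ := x
  obtain ⟨g₂, k₂⟩ := y
  induction k₁ with
  | zero =>
    induction k₂ with
    | zero => exact C.scalarPairing_gen g₁ g₂
    | succ n ih =>
      rw [← D_letter]
      exact ih.D_right (C.hasParity_letter _) (C.hasParity_letter _)
  | succ n ih =>
    rw [← D_letter, show n + 1 + k₂ = n + k₂ + 1 by ring]
    exact ih.D_left

lemma word_stdWord (ns ms ss ts : List ℕ) :
    C.word (stdWord ns ms ss ts) = VA.stdMon C.A C.b C.c C.β C.γ ns ms ss ts := by
  simp only [word, stdWord, VA.stdMon, List.map_append, List.map_map]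
  rfl

def wordSpan (d : ℤ) : Submodule ℂ V :=
  Submodule.span ℂ {v | ∃ w, d ≤ wordDeg w ∧ v = C.word w}

def letterSpan (d : ℤ) : Submodule ℂ V :=
  Submodule.span ℂ {v | ∃ ℓ : WeilLetter, ℓ.2 = d ∧ v = C.letter ℓ}

def pairSpan (d : ℤ) : Submodule ℂ V :=
  Submodule.span ℂ
    {v | ∃ x y : WeilLetter, x.2 + y.2 = d ∧ v = C.A.wick (C.letter x) (C.letter y)}

variable {C}

lemma wordSpan_mono {d e : ℤ} (h : e ≤ d) : C.wordSpan d ≤ C.wordSpan e :=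
  Submodule.span_mono fun _ ⟨w, hw, hv⟩ => ⟨w, h.trans hw, hv⟩

lemma word_mem_wordSpan {w : List WeilLetter} {d : ℤ} (h : d ≤ wordDeg w) :
    C.word w ∈ C.wordSpan d :=
  Submodule.subset_span ⟨w, h, rfl⟩

lemma mem_wordSpan_of_le {v : V} {d e : ℤ} (hv : v ∈ C.wordSpan d) (h : e ≤ d) :
    v ∈ C.wordSpan e :=
  wordSpan_mono h hv

lemma letter_mem_letterSpan (ℓ : WeilLetter) {d : ℤ} (h : ℓ.2 = d) :
    C.letter ℓ ∈ C.letterSpan d :=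
  Submodule.subset_span ⟨ℓ, h, rfl⟩

lemma wick_mem_pairSpan (x y : WeilLetter) {d : ℤ} (h : x.2 + y.2 = d) :
    C.A.wick (C.letter x) (C.letter y) ∈ C.pairSpan d :=
  Submodule.subset_span ⟨x, y, h, rfl⟩

lemma wick_letter_mem_wordSpan (ℓ : WeilLetter) {d : ℤ} {v : V} (hv : v ∈ C.wordSpan d) :
    C.A.wick (C.letter ℓ) v ∈ C.wordSpan (d + ℓ.2) := by
  refine apply_mem_of_mem_span (f := C.A.circ (-1) (C.letter ℓ)) ?_ hv
  rintro _ ⟨w, hw, rfl⟩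
  exact word_mem_wordSpan (w := ℓ :: w) (by rw [wordDeg_cons]; push_cast; omega)

lemma circ_neg_letter_mem_wordSpan (x : WeilLetter) (j : ℕ) {e : ℤ} {v : V}
    (hv : v ∈ C.wordSpan e) : C.A.circ (-1 - j) (C.letter x) v ∈ C.wordSpan (e + x.2 + j) := by
  rw [VA.circ_neg_one_sub, C.iterate_D_letter]
  refine Submodule.smul_mem _ _ (mem_wordSpan_of_le (wick_letter_mem_wordSpan _ hv) ?_)
  push_cast
  omega

lemma circ_letter_word_mem_wordSpan (a : WeilLetter) (m : ℕ) (u : List WeilLetter) :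
    C.A.circ m (C.letter a) (C.word u) ∈ C.wordSpan (a.2 + wordDeg u - m) := by
  induction u with
  | nil => simp [word, VA.wlist, C.A.unit_right_nonneg]
  | cons h u ih =>
    rw [word_cons, VA.wick, VA.commutator_formula (C.hasParity_letter a) (C.hasParity_letter h)]
    refine Submodule.add_mem _ (Submodule.smul_mem _ _ ?_) (finsum_mem_submodule fun j => ?_)
    · exact mem_wordSpan_of_le (wick_letter_mem_wordSpan h ih)
        (by rw [wordDeg_cons]; push_cast; omega)
    · obtain ⟨κ, hκ⟩ := C.scalarPairing_letter a h
      rw [hκ]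
      split_ifs
      · rw [map_smul, LinearMap.smul_apply, C.A.unit_left]
        split_ifs
        · refine Submodule.smul_mem _ _ (Submodule.smul_mem _ _ (word_mem_wordSpan ?_))
          rw [wordDeg_cons]
          push_cast
          omega
        · simp
      · simp

lemma wick_wick_letter_word_mem_wordSpan (x y : WeilLetter) (t : List WeilLetter) :
    C.A.wick (C.A.wick (C.letter x) (C.letter y)) (C.word t)
      ∈ C.wordSpan (x.2 + y.2 + wordDeg t) := by
  rw [VA.wick, VA.wick,
    VA.iterate_formula (C.hasParity_letter x) (C.hasParity_letter y)]
  refine finsum_mem_submodule fun j => Submodule.smul_mem _ _ (Submodule.sub_mem _ ?_ ?_)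
  · rcases j with _ | i
    · exact word_mem_wordSpan (w := x :: y :: t) (by simp [wordDeg_cons]; omega)
    · rw [show -1 + ((i + 1 : ℕ) : ℤ) = i by push_cast; ring]
      refine mem_wordSpan_of_le (circ_neg_letter_mem_wordSpan x (i + 1)
        (circ_letter_word_mem_wordSpan y i t)) ?_
      push_cast
      omega
  · rw [show (-1 : ℤ) + -1 - j = -1 - (j + 1 : ℕ) by push_cast; ring]
    refine Submodule.smul_mem _ _ (mem_wordSpan_of_le (circ_neg_letter_mem_wordSpan y (j + 1)
      (circ_letter_word_mem_wordSpan x j t)) ?_)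
    push_cast
    omega

lemma circ_letter_one_mem_letterSpan (x : WeilLetter) (n : ℤ) :
    C.A.circ n (C.letter x) C.A.one ∈ C.letterSpan (x.2 - n - 1) := by
  rcases le_or_gt 0 n with hn | hn
  · rw [C.A.unit_right_nonneg _ _ hn]
    exact Submodule.zero_mem _
  · obtain ⟨j, rfl⟩ : ∃ j : ℕ, n = -1 - j := ⟨(-1 - n).toNat, by omega⟩
    rw [VA.circ_neg_one_sub, C.iterate_D_letter, VA.wick, C.A.unit_right_wick]
    exact Submodule.smul_mem _ _ (letter_mem_letterSpan _ (by push_cast; ring))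

lemma circ_neg_letter_mem_pairSpan (x : WeilLetter) (j : ℕ) {e : ℤ} {v : V}
    (hv : v ∈ C.letterSpan e) : C.A.circ (-1 - j) (C.letter x) v ∈ C.pairSpan (e + x.2 + j) := by
  refine apply_mem_of_mem_span (f := C.A.circ (-1 - j) (C.letter x)) ?_ hv
  rintro _ ⟨ℓ, hℓ, rfl⟩
  rw [VA.circ_neg_one_sub, C.iterate_D_letter]
  exact Submodule.smul_mem _ _ (wick_mem_pairSpan _ _ (by push_cast; omega))

lemma circ_wick_letter_mem_letterSpan (x y h : WeilLetter) (m : ℕ) :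
    C.A.circ m (C.A.wick (C.letter x) (C.letter y)) (C.letter h)
      ∈ C.letterSpan (x.2 + y.2 + h.2 - m) := by
  obtain ⟨κ, hκ⟩ := C.scalarPairing_letter y h
  obtain ⟨κ', hκ'⟩ := C.scalarPairing_letter x h
  rw [VA.wick, VA.iterate_formula (C.hasParity_letter x) (C.hasParity_letter y)]
  refine finsum_mem_submodule fun i => Submodule.smul_mem _ _ (Submodule.sub_mem _ ?_ ?_)
  · rw [show (m : ℤ) + i = (m + i : ℕ) by push_cast; ring, hκ]
    split_ifs
    · rw [map_smul]
      refine Submodule.smul_mem _ _ ?_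
      convert circ_letter_one_mem_letterSpan x (-1 - i) using 2
      omega
    · simp
  · rw [hκ']
    split_ifs
    · rw [map_smul]
      refine Submodule.smul_mem _ _ (Submodule.smul_mem _ _ ?_)
      convert circ_letter_one_mem_letterSpan y (-1 + m - i) using 2
      omega
    · simp


variable (C)

/-- `L^𝒮 + ½ L^ℰ`. -/
noncomputable def evenCurrent : V :=
  (C.A.wick (C.A.D C.β) C.γ + (2 : ℂ) • C.A.wick C.β (C.A.D C.γ))
    + (1 / 2 : ℂ) • (-(C.A.wick (C.A.D C.b) C.c) - (2 : ℂ) • C.A.wick C.b (C.A.D C.c))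

noncomputable def brstCurrent : V :=
  C.A.wick C.evenCurrent C.c + (3 / 4 : ℂ) • C.A.D (C.A.D C.c)

noncomputable def brst : V →ₗ[ℂ] V := C.A.circ 0 C.brstCurrent

lemma hasParity_evenCurrent : C.A.HasParity C.evenCurrent false := by
  have hDβ := C.hasParity_letter (.β, 1)
  have hDγ := C.hasParity_letter (.γ, 1)
  have hDb := C.hasParity_letter (.b, 1)
  have hDc := C.hasParity_letter (.c, 1)
  exact add_mem (add_mem (C.A.circ_ee _ hDβ C.hγ) (Submodule.smul_mem _ _ (C.A.circ_ee _ C.hβ hDγ)))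
    (Submodule.smul_mem _ _ (sub_mem (neg_mem (C.A.circ_oo _ hDb C.hc))
      (Submodule.smul_mem _ _ (C.A.circ_oo _ C.hb hDc))))

lemma hasParity_brstCurrent : C.A.HasParity C.brstCurrent true :=
  add_mem (C.A.circ_eo _ C.hasParity_evenCurrent C.hc)
    (Submodule.smul_mem _ _ ((C.hasParity_letter (.c, 2))))

lemma evenCurrent_mem_pairSpan : C.evenCurrent ∈ C.pairSpan 1 :=
  add_mem (add_mem (wick_mem_pairSpan (.β, 1) (.γ, 0) rfl)
      (Submodule.smul_mem _ _ (wick_mem_pairSpan (.β, 0) (.γ, 1) rfl)))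
    (Submodule.smul_mem _ _ (sub_mem (neg_mem (wick_mem_pairSpan (.b, 1) (.c, 0) rfl))
      (Submodule.smul_mem _ _ (wick_mem_pairSpan (.b, 0) (.c, 1) rfl))))

variable {C}

lemma circ_mem_letterSpan_of_mem_pairSpan {d : ℤ} {v : V} (hv : v ∈ C.pairSpan d)
    (h : WeilLetter) (m : ℕ) : C.A.circ m v (C.letter h) ∈ C.letterSpan (d + h.2 - m) := by
  refine apply_mem_of_mem_span (f := (C.A.circ m).flip (C.letter h)) ?_ hv
  rintro _ ⟨x, y, hxy, rfl⟩
  rw [← hxy]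
  exact circ_wick_letter_mem_letterSpan x y h m

lemma brst_gen_mem_pairSpan (g : WeilGen) : C.brst (C.gen g) ∈ C.pairSpan 1 := by
  obtain ⟨κ, hκ⟩ := C.scalarPairing_gen .c g
  rw [brst, brstCurrent, map_add, LinearMap.add_apply, map_smul, LinearMap.smul_apply,
    VA.circ_zero_D_left, smul_zero, add_zero, VA.wick,
    VA.iterate_formula C.hasParity_evenCurrent (show C.A.HasParity C.c true from C.hc)]
  refine finsum_mem_submodule fun j => Submodule.smul_mem _ _ (Submodule.sub_mem _ ?_ ?_)
  · rw [zero_add, show C.c = C.gen .c from rfl, hκ]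
    split_ifs with hj
    · subst hj
      rw [map_smul, Nat.cast_zero, sub_zero, C.A.unit_right_wick]
      exact Submodule.smul_mem _ _ C.evenCurrent_mem_pairSpan
    · rw [map_zero]
      exact zero_mem _
  · have h : C.A.circ (-1 - j) C.c (C.A.circ j C.evenCurrent (C.gen g))
        ∈ C.pairSpan (1 + 0 - j + 0 + j) :=
      circ_neg_letter_mem_pairSpan (.c, 0) j
        (circ_mem_letterSpan_of_mem_pairSpan C.evenCurrent_mem_pairSpan (g, 0) j)
    rw [show (-1 : ℤ) + 0 - j = -1 - j by ring]
    exact Submodule.smul_mem _ _ (by simpa using h)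

lemma D_mem_pairSpan {d : ℤ} {v : V} (hv : v ∈ C.pairSpan d) : C.A.D v ∈ C.pairSpan (d + 1) := by
  refine apply_mem_of_mem_span (f := (C.A.circ (-2)).flip C.A.one) ?_ hv
  rintro _ ⟨⟨gx, kx⟩, ⟨gy, ky⟩, hxy, rfl⟩
  change C.A.D _ ∈ _
  rw [VA.D_wick (C.hasParity_letter _) (C.hasParity_letter _), D_letter, D_letter]
  exact add_mem (wick_mem_pairSpan _ _ (by push_cast; omega))
    (wick_mem_pairSpan _ _ (by push_cast; omega))

lemma brst_D {x : V} {p : Bool} (hx : C.A.HasParity x p) : C.brst (C.A.D x) = C.A.D (C.brst x) :=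
  VA.circ_zero_D C.hasParity_brstCurrent hx

lemma brst_letter_mem_pairSpan (ℓ : WeilLetter) : C.brst (C.letter ℓ) ∈ C.pairSpan (ℓ.2 + 1) := by
  obtain ⟨g, k⟩ := ℓ
  induction k with
  | zero => exact brst_gen_mem_pairSpan g
  | succ n ih =>
    rw [← D_letter, brst_D (C.hasParity_letter _)]
    convert D_mem_pairSpan ih using 2
    push_cast
    ring

lemma wick_mem_wordSpan_of_mem_pairSpan {d : ℤ} {v : V} (hv : v ∈ C.pairSpan d)
    (t : List WeilLetter) : C.A.wick v (C.word t) ∈ C.wordSpan (d + wordDeg t) := by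
  refine apply_mem_of_mem_span (f := (C.A.circ (-1)).flip (C.word t)) ?_ hv
  rintro _ ⟨x, y, hxy, rfl⟩
  rw [← hxy]
  exact wick_wick_letter_word_mem_wordSpan x y t

lemma brst_word_mem_wordSpan (u : List WeilLetter) :
    C.brst (C.word u) ∈ C.wordSpan (wordDeg u + 1) := by
  induction u with
  | nil => simp [brst, word, VA.wlist, C.A.unit_right_nonneg]
  | cons a u ih =>
    rw [word_cons, brst, VA.circ_zero_wick C.hasParity_brstCurrent (C.hasParity_letter a)]
    refine add_mem ?_ (Submodule.smul_mem _ _ ?_)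
    · refine mem_wordSpan_of_le (wick_mem_wordSpan_of_mem_pairSpan
        (brst_letter_mem_pairSpan a) u) ?_
      rw [wordDeg_cons]
      push_cast
      omega
    · refine mem_wordSpan_of_le (wick_letter_mem_wordSpan a ih) ?_
      rw [wordDeg_cons]
      push_cast
      omega

variable (C)

lemma wick_letter_comm (x y : WeilLetter) (z : V) :
    C.A.wick (C.letter x) (C.A.wick (C.letter y) z)
      = VA.koszulSign x.1.isOdd y.1.isOdd • C.A.wick (C.letter y) (C.A.wick (C.letter x) z) := by
  obtain ⟨κ, hκ⟩ := C.scalarPairing_letter x y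
  -- the contractions are multiples of `1`, and `1₍₋₂₋ⱼ₎ z = 0`
  have hterm (j : ℕ) :
      zchoose (-1) j • C.A.circ (-1 + -1 - j) (C.A.circ j (C.letter x) (C.letter y)) z = 0 := by
    rw [hκ]
    split_ifs
    · rw [map_smul, LinearMap.smul_apply, C.A.unit_left, if_neg (by omega), smul_zero, smul_zero]
    · rw [map_zero, LinearMap.zero_apply, smul_zero]
  rw [VA.wick, VA.wick, VA.commutator_formula (C.hasParity_letter x) (C.hasParity_letter y),
    finsum_eq_zero_of_forall_eq_zero hterm, add_zero]
  rfl

lemma wick_letter_wick_self {x : WeilLetter} (hx : x.1.isOdd = true) (z : V) :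
    C.A.wick (C.letter x) (C.A.wick (C.letter x) z) = 0 := by
  have h := C.wick_letter_comm x x z
  rw [hx, VA.koszulSign, Bool.and_self, if_pos rfl, neg_one_smul, eq_neg_iff_add_eq_zero,
    ← two_smul ℂ] at h
  exact (smul_eq_zero.1 h).resolve_left two_ne_zero

lemma exists_word_eq_smul_of_perm {w w' : List WeilLetter} (h : w.Perm w') :
    ∃ s : ℂ, C.word w = s • C.word w' := by
  induction h with
  | nil => exact ⟨1, (one_smul _ _).symm⟩
  | cons x _ ih =>
    obtain ⟨s, hs⟩ := ih
    exact ⟨s, by rw [word_cons, word_cons, hs]; exact map_smul _ _ _⟩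
  | swap x y l => exact ⟨_, C.wick_letter_comm y x (C.word l)⟩
  | trans _ _ ih₁ ih₂ =>
    obtain ⟨s₁, hs₁⟩ := ih₁
    obtain ⟨s₂, hs₂⟩ := ih₂
    exact ⟨s₁ * s₂, by rw [hs₁, hs₂, smul_smul]⟩

lemma word_eq_zero_of_not_nodup {g : WeilGen} (hg : g.isOdd = true) {ds : List ℕ}
    (hds : ¬ds.Nodup) {w : List WeilLetter} (h : (ds.map (g, ·)).Sublist w) : C.word w = 0 := by
  obtain ⟨k, hk⟩ : ∃ k, [k, k].Sublist ds := by simpa [List.nodup_iff_sublist] using hds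
  obtain ⟨l, hl⟩ := ((hk.map (g, ·)).trans h).exists_perm_append
  obtain ⟨s, hs⟩ := C.exists_word_eq_smul_of_perm hl
  rw [hs, List.map_cons, List.map_cons, List.map_nil, List.cons_append, List.cons_append,
    List.nil_append, word_cons, word_cons, C.wick_letter_wick_self hg, smul_zero]

lemma word_mem_span_DSet {w : List WeilLetter} (hw : 1 ≤ wordDeg w) :
    C.word w ∈ Submodule.span ℂ (VA.DSet C.A C.b C.c C.β C.γ) := by
  obtain ⟨ns, ms, ss, ts, hns, hms, hss, hts, hperm⟩ := exists_sorted_perm_stdWord w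
  obtain ⟨s, hs⟩ := C.exists_word_eq_smul_of_perm hperm
  rw [hs]
  refine Submodule.smul_mem _ _ ?_
  by_cases hn : ns.Nodup
  swap
  · rw [C.word_eq_zero_of_not_nodup (g := .b) rfl hn (by simp [stdWord])]
    exact zero_mem _
  by_cases hm : ms.Nodup
  swap
  · rw [C.word_eq_zero_of_not_nodup (g := .c) rfl hm (by simp [stdWord])]
    exact zero_mem _
  have hstrict {l : List ℕ} (hge : l.Pairwise (· ≥ ·)) (hl : l.Nodup) : l.Pairwise (· > ·) :=
    (hge.and hl).imp fun h => lt_of_le_of_ne h.1 h.2.symm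
  have hdeg : 1 ≤ (ns ++ ms ++ ss ++ ts).sum := by
    rwa [← wordDeg_stdWord, wordDeg, ← (hperm.map _).sum_eq]
  refine Submodule.subset_span ⟨_, _, _, _, (hstrict hns hn).isChain, (hstrict hms hm).isChain,
    hss.isChain, hts.isChain, ?_, C.word_stdWord _ _ _ _⟩
  by_contra! h
  rw [List.sum_eq_zero fun k hk => Nat.le_zero.1 (h k hk)] at hdeg
  exact Nat.not_succ_le_zero 0 hdeg

lemma brst_mem_span_DSet {v : V} (hv : v ∈ Submodule.span ℂ (VA.StdSet C.A C.b C.c C.β C.γ)) :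
    C.brst v ∈ Submodule.span ℂ (VA.DSet C.A C.b C.c C.β C.γ) := by
  refine apply_mem_of_mem_span ?_ hv
  rintro _ ⟨ns, ms, ss, ts, -, -, -, -, rfl⟩
  rw [← word_stdWord]
  refine (Submodule.span_le.2 ?_) (brst_word_mem_wordSpan _)
  rintro _ ⟨w, hw, rfl⟩
  exact C.word_mem_span_DSet (by omega)

end WeilData

theorem stmt10_general (V : Type) [AddCommGroup V] [Module ℂ V] (A : VA V)
    (b c β γ : V)
    (hb : b ∈ A.odd) (hc : c ∈ A.odd)
    (hbc0 : A.circ 0 b c = A.one) (hbc : ∀ n : ℤ, 1 ≤ n → A.circ n b c = 0)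
    (hcb0 : A.circ 0 c b = A.one) (hcb : ∀ n : ℤ, 1 ≤ n → A.circ n c b = 0)
    (hbb : ∀ n : ℤ, 0 ≤ n → A.circ n b b = 0)
    (hcc : ∀ n : ℤ, 0 ≤ n → A.circ n c c = 0)
    (hβ : β ∈ A.even) (hγ : γ ∈ A.even)
    (hβγ0 : A.circ 0 β γ = A.one) (hβγ : ∀ n : ℤ, 1 ≤ n → A.circ n β γ = 0)
    (hγβ0 : A.circ 0 γ β = -A.one) (hγβ : ∀ n : ℤ, 1 ≤ n → A.circ n γ β = 0)
    (hββ : ∀ n : ℤ, 0 ≤ n → A.circ n β β = 0)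
    (hγγ : ∀ n : ℤ, 0 ≤ n → A.circ n γ γ = 0)
    (hcross : ∀ n : ℤ, 0 ≤ n →
      A.circ n b β = 0 ∧ A.circ n b γ = 0 ∧ A.circ n c β = 0 ∧ A.circ n c γ = 0 ∧
      A.circ n β b = 0 ∧ A.circ n γ b = 0 ∧ A.circ n β c = 0 ∧ A.circ n γ c = 0)
    (LS LE J : V)
    (hLS : LS = A.wick (A.D β) γ + (2 : ℂ) • A.wick β (A.D γ))
    (hLE : LE = -(A.wick (A.D b) c) - (2 : ℂ) • A.wick b (A.D c))
    (hJ : J = A.wick (LS + (1 / 2 : ℂ) • LE) c + (3 / 4 : ℂ) • A.D (A.D c))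
    :
    ∀ v ∈ Submodule.span ℂ (VA.StdSet A b c β γ),
      A.circ 0 J v ∈ Submodule.span ℂ (VA.DSet A b c β γ) := by
  subst hJ hLS hLE
  intro v hv
  exact (WeilData.mk A b c β γ hb hc hbc0 hbc hcb0 hcb hbb hcc hβ hγ hβγ0 hβγ hγβ0 hγβ hββ hγγ
    hcross).brst_mem_span_DSet hv

/-- In the semi-infinite Weil complex, the image of the BRST
differential `[Q,-]` is contained in the span `𝒟` of standard monomials containing at
least one derivative. -/
theorem stmt10 (V : Type) [AddCommGroup V] [Module ℂ V] (A : VA V)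
    (b c β γ : V)
    (hb : b ∈ A.odd) (hc : c ∈ A.odd)
    (hbc0 : A.circ 0 b c = A.one) (hbc : ∀ n : ℤ, 1 ≤ n → A.circ n b c = 0)
    (hcb0 : A.circ 0 c b = A.one) (hcb : ∀ n : ℤ, 1 ≤ n → A.circ n c b = 0)
    (hbb : ∀ n : ℤ, 0 ≤ n → A.circ n b b = 0)
    (hcc : ∀ n : ℤ, 0 ≤ n → A.circ n c c = 0)
    (hβ : β ∈ A.even) (hγ : γ ∈ A.even)
    (hβγ0 : A.circ 0 β γ = A.one) (hβγ : ∀ n : ℤ, 1 ≤ n → A.circ n β γ = 0)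
    (hγβ0 : A.circ 0 γ β = -A.one) (hγβ : ∀ n : ℤ, 1 ≤ n → A.circ n γ β = 0)
    (hββ : ∀ n : ℤ, 0 ≤ n → A.circ n β β = 0)
    (hγγ : ∀ n : ℤ, 0 ≤ n → A.circ n γ γ = 0)
    (hcross : ∀ n : ℤ, 0 ≤ n →
      A.circ n b β = 0 ∧ A.circ n b γ = 0 ∧ A.circ n c β = 0 ∧ A.circ n c γ = 0 ∧
      A.circ n β b = 0 ∧ A.circ n γ b = 0 ∧ A.circ n β c = 0 ∧ A.circ n γ c = 0)
    (LS LE LW J : V)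
    (hLS : LS = A.wick (A.D β) γ + (2 : ℂ) • A.wick β (A.D γ))
    (hLE : LE = -(A.wick (A.D b) c) - (2 : ℂ) • A.wick b (A.D c))
    (hLW : LW = LE + LS)
    (hJ : J = A.wick (LS + (1 / 2 : ℂ) • LE) c + (3 / 4 : ℂ) • A.D (A.D c))
    :
    ∀ v ∈ Submodule.span ℂ (VA.StdSet A b c β γ),
      A.circ 0 J v ∈ Submodule.span ℂ (VA.DSet A b c β γ) :=
  stmt10_general V A b c β γ hb hc hbc0 hbc hcb0 hcb hbb hcc hβ hγ hβγ0 hβγ hγβ0 hγβ hββ hγγ hcross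
    LS LE J hLS hLE hJ
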